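/- arXiv:math/0404134 — 2 statements merged into one kernel-verified Lean document; each statement's English description precedes it below -/
import Mathlib

section
/- Let P(z₁,z₂) and Q(z₁,z₂) be analytic functions near the origin, P = a₁z₁ + a₂z₂ + P₂, Q = b₁z₁ + b₂z₂ + Q₂ with P₂, Q₂ vanishing to order ≥ 2. If, after substituting z₁ = u, z₂ = uv, the function P(u,uv) + v·Q(u,uv) is divisible by u² (as an analytic function of (u,v)), and P(0,0) = Q(0,0) = 0, then a₁ = b₂ = 0 and a₂ = −b₁. -/
/-- if P = a₁z₁ + a₂z₂ + P₂ and Q = b₁z₁ + b₂z₂ + Q₂ (P₂, Q₂ analytic,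
vanishing to order ≥ 2 at 0) and P(u,uv) + v·Q(u,uv) is divisible by u² as an
analytic function near 0, then a₁ = b₂ = 0 and a₂ = -b₁. -/
theorem stmt_9 (a1 a2 b1 b2 : ℂ) (P Q P2 Q2 : ℂ × ℂ → ℂ)
    (hP2a : ∀ z, AnalyticAt ℂ P2 z) (hQ2a : ∀ z, AnalyticAt ℂ Q2 z)
    (hP2o : P2 0 = 0 ∧ fderiv ℂ P2 0 = 0)
    (hQ2o : Q2 0 = 0 ∧ fderiv ℂ Q2 0 = 0)
    (hP : ∀ z : ℂ × ℂ, P z = a1 * z.1 + a2 * z.2 + P2 z)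
    (hQ : ∀ z : ℂ × ℂ, Q z = b1 * z.1 + b2 * z.2 + Q2 z)
    (hP0 : P 0 = 0) (hQ0 : Q 0 = 0)
    (g : ℂ × ℂ → ℂ) (hg : AnalyticAt ℂ g 0)
    (hdiv : ∀ᶠ w : ℂ × ℂ in nhds 0,
      P (w.1, w.1 * w.2) + w.2 * Q (w.1, w.1 * w.2) = w.1 ^ 2 * g w) :
    a1 = 0 ∧ b2 = 0 ∧ a2 = -b1 := by
  obtain ⟨hP20, hP2d⟩ := hP2o
  obtain ⟨hQ20, hQ2d⟩ := hQ2o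
  rw [Metric.eventually_nhds_iff] at hdiv
  obtain ⟨ε, hε, hdiv⟩ := hdiv
  have hga : ∀ᶠ z in nhds (0 : ℂ × ℂ), AnalyticAt ℂ g z := hg.eventually_analyticAt
  rw [Metric.eventually_nhds_iff] at hga
  obtain ⟨ε2, hε2, hga⟩ := hga
  set δ := min ε ε2 with hδdef
  have hδ : 0 < δ := lt_min hε hε2
  have key : ∀ c : ℂ, ‖c‖ < δ → a1 + (a2 + b1) * c + b2 * c ^ 2 = 0 := by
    intro c hc
    have hcε : ‖c‖ < ε := lt_of_lt_of_le hc (min_le_left _ _)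
    have hcε2 : ‖c‖ < ε2 := lt_of_lt_of_le hc (min_le_right _ _)
    set φ : ℂ → ℂ := fun t => P2 (t, t * c) + c * Q2 (t, t * c) with hφ
    have hcurve : HasDerivAt (fun t : ℂ => (t, t * c)) ((1 : ℂ), c) 0 := by
      simpa using (hasDerivAt_id (0 : ℂ)).prodMk ((hasDerivAt_id (0 : ℂ)).mul_const c)
    have hP2f : HasFDerivAt P2 (0 : (ℂ × ℂ) →L[ℂ] ℂ) 0 := by
      have := (hP2a 0).differentiableAt.hasFDerivAt
      rwa [hP2d] at this
    have hQ2f : HasFDerivAt Q2 (0 : (ℂ × ℂ) →L[ℂ] ℂ) 0 := by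
      have := (hQ2a 0).differentiableAt.hasFDerivAt
      rwa [hQ2d] at this
    have h0 : ((0 : ℂ), (0 : ℂ) * c) = (0 : ℂ × ℂ) := by simp
    have hP2f' : HasFDerivAt P2 (0 : (ℂ × ℂ) →L[ℂ] ℂ) ((0 : ℂ), (0 : ℂ) * c) := by
      rw [h0]; exact hP2f
    have hQ2f' : HasFDerivAt Q2 (0 : (ℂ × ℂ) →L[ℂ] ℂ) ((0 : ℂ), (0 : ℂ) * c) := by
      rw [h0]; exact hQ2f
    have hP2c : HasDerivAt (fun t : ℂ => P2 (t, t * c)) 0 0 := by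
      have := hP2f'.comp_hasDerivAt (0 : ℂ) hcurve
      simp only [ContinuousLinearMap.zero_apply] at this; exact this
    have hQ2c : HasDerivAt (fun t : ℂ => Q2 (t, t * c)) 0 0 := by
      have := hQ2f'.comp_hasDerivAt (0 : ℂ) hcurve
      simp only [ContinuousLinearMap.zero_apply] at this; exact this
    have hφd : HasDerivAt φ 0 0 := by
      have := hP2c.add (hQ2c.const_mul c)
      simp only [mul_zero, add_zero] at this; exact this
    have hφ0 : φ 0 = 0 := by simp [hφ, hP20, hQ20, Prod.mk_zero_zero]
    have h2 : Filter.Tendsto (fun t : ℂ => φ t / t) (nhdsWithin 0 {(0:ℂ)}ᶜ) (nhds 0) := by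
      have := hasDerivAt_iff_tendsto_slope.mp hφd
      refine this.congr (fun t => ?_)
      simp [slope_def_field, hφ0]
    have hgc : ContinuousAt g (0, c) := by
      refine (hga (y := ((0 : ℂ), c)) ?_).continuousAt
      simp only [Prod.dist_eq, dist_eq_norm, sub_zero]
      exact max_lt (by simpa using hε2) hcε2
    have h1 : Filter.Tendsto (fun t : ℂ => t * g (t, c)) (nhdsWithin 0 {(0:ℂ)}ᶜ) (nhds 0) := by
      have hmap : ContinuousAt (fun t : ℂ => ((t, c) : ℂ × ℂ)) 0 :=
        continuousAt_id.prodMk continuousAt_const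
      have hgc2 : ContinuousAt (g ∘ fun t : ℂ => ((t, c) : ℂ × ℂ)) 0 :=
        ContinuousAt.comp (f := fun t : ℂ => ((t, c) : ℂ × ℂ)) hgc hmap
      have hcont : ContinuousAt (fun t : ℂ => t * g (t, c)) 0 :=
        continuousAt_id.mul (hgc2 : ContinuousAt (fun t : ℂ => g (t, c)) 0)
      have := hcont.tendsto.mono_left (nhdsWithin_le_nhds (s := {(0:ℂ)}ᶜ))
      simpa using this
    have heq : ∀ᶠ t : ℂ in nhdsWithin 0 {(0:ℂ)}ᶜ,
        a1 + (a2 + b1) * c + b2 * c ^ 2 = t * g (t, c) - φ t / t := by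
      have hsm : ∀ᶠ t : ℂ in nhdsWithin 0 {(0:ℂ)}ᶜ, ‖t‖ < ε := by
        have : ∀ᶠ t : ℂ in nhds 0, ‖t‖ < ε := by
          have := Metric.ball_mem_nhds (0 : ℂ) hε
          filter_upwards [this] with t ht
          simpa [dist_eq_norm] using ht
        exact this.filter_mono nhdsWithin_le_nhds
      filter_upwards [hsm, self_mem_nhdsWithin] with t ht htne
      have htne' : t ≠ 0 := htne
      have hw := hdiv (y := (t, c)) (by
        simp only [Prod.dist_eq, dist_eq_norm, sub_zero]
        exact max_lt ht hcε)
      simp only [hP, hQ] at hw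
      rw [hφ]
      field_simp
      simp only [mul_comm c t]
      linear_combination hw
    have hconst : Filter.Tendsto (fun _ : ℂ => a1 + (a2 + b1) * c + b2 * c ^ 2)
        (nhdsWithin 0 {(0:ℂ)}ᶜ) (nhds 0) := by
      refine Filter.Tendsto.congr' ?_ (by simpa using h1.sub h2)
      filter_upwards [heq] with t ht
      exact ht.symm
    exact tendsto_nhds_unique tendsto_const_nhds hconst
  have e0 : a1 = 0 := by
    have := key 0 (by simpa using hδ)
    linear_combination this
  set d : ℂ := ((δ / 2 : ℝ) : ℂ) with hd
  have hdn : ‖d‖ < δ := by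
    rw [hd, Complex.norm_real, Real.norm_eq_abs, abs_of_pos (by positivity)]
    linarith
  have hd0 : d ≠ 0 := by
    rw [hd]
    exact_mod_cast Complex.ofReal_ne_zero.mpr (by positivity)
  have e1 := key d hdn
  have e2 := key (-d) (by simpa using hdn)
  have hb2 : b2 = 0 := by
    have h2 : b2 * (d ^ 2 * 2) = 0 := by linear_combination e1 + e2 - 2 * e0
    rcases mul_eq_zero.mp h2 with h | h
    · exact h
    · exact absurd h (by simp [pow_eq_zero_iff, hd0])
  refine ⟨e0, hb2, ?_⟩
  have h3 : (a2 + b1) * d = 0 := by linear_combination e1 - e0 - d^2 * hb2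
  rcases mul_eq_zero.mp h3 with h | h
  · linear_combination h
  · exact absurd h hd0
end

section
/- Let V ⊂ ℂ³ (coordinates z₁, z₂, w₁) be the surface w₁² = z₁, parametrized by (z₁, z₂, w₁) = (t², s, t), with the involution α: (t,s) ↦ (−t, s). A holomorphic section ω of Ω¹_V ⊗ Ω²_V is invariant under α if and only if ω = (P(z₁,z₂)·dz₁/z₁ + Q(z₁,z₂)·dz₂) ⊗ (dz₁ ∧ dz₂) for some holomorphic functions P, Q of (z₁,z₂), and anti-invariant if and only if ω = (P(z₁,z₂)·dz₁ + Q(z₁,z₂)·dz₂) ⊗ (dz₁ ∧ dz₂)/w₁ for holomorphic P, Q. -/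
open Complex Finset Filter Topology
open scoped ENNReal NNReal

noncomputable section

namespace Stmt15

def mon (n j : ℕ) : ContinuousMultilinearMap ℂ (fun _ : Fin n => ℂ × ℂ) ℂ :=
  (ContinuousMultilinearMap.mkPiAlgebra ℂ (Fin n) ℂ).compContinuousLinearMap
    fun i => if (i : ℕ) < j then ContinuousLinearMap.fst ℂ ℂ ℂ else ContinuousLinearMap.snd ℂ ℂ ℂ

lemma mon_apply (n j : ℕ) (hj : j ≤ n) (y : ℂ × ℂ) :
    (mon n j) (fun _ => y) = y.1 ^ j * y.2 ^ (n - j) := by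
  have h : ∀ i : Fin n,
      (if (i : ℕ) < j then ContinuousLinearMap.fst ℂ ℂ ℂ else ContinuousLinearMap.snd ℂ ℂ ℂ) y
      = if (i : ℕ) < j then y.1 else y.2 := fun i => by split <;> rfl
  simp only [mon, ContinuousMultilinearMap.compContinuousLinearMap_apply,
    ContinuousMultilinearMap.mkPiAlgebra_apply, h]
  rw [Fin.prod_univ_eq_prod_range (fun i => if i < j then y.1 else y.2) n]
  obtain ⟨m, rfl⟩ := Nat.exists_eq_add_of_le hj
  rw [Finset.prod_range_add]
  have h1 : ∀ i ∈ Finset.range j, (if i < j then y.1 else y.2) = y.1 := by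
    intro i hi; rw [if_pos (Finset.mem_range.mp hi)]
  have h2 : ∀ i ∈ Finset.range m, (if j + i < j then y.1 else y.2) = y.2 := by
    intro i hi; rw [if_neg (by omega)]
  rw [Finset.prod_congr rfl h1, Finset.prod_congr rfl h2, Finset.prod_const, Finset.prod_const,
    Finset.card_range, Finset.card_range]
  congr 2
  omega

lemma norm_mon_le (n j : ℕ) : ‖mon n j‖ ≤ 1 := by
  refine le_trans (ContinuousMultilinearMap.norm_compContinuousLinearMap_le _ _) ?_
  rw [ContinuousMultilinearMap.norm_mkPiAlgebra, one_mul]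
  refine Finset.prod_le_one (fun i _ => norm_nonneg _) (fun i _ => ?_)
  split
  · exact ContinuousLinearMap.norm_fst_le ℂ ℂ ℂ
  · exact ContinuousLinearMap.norm_snd_le ℂ ℂ ℂ

def qser (a : ℕ → ℕ → ℂ) : FormalMultilinearSeries ℂ (ℂ × ℂ) ℂ :=
  fun n => ∑ j ∈ range (n + 1), a j (n - j) • mon n j

def gfun (a : ℕ → ℕ → ℂ) : ℂ × ℂ → ℂ :=
  fun y => ∑' p : ℕ × ℕ, a p.1 p.2 * y.1 ^ p.1 * y.2 ^ p.2

lemma summable_aux {a : ℕ → ℕ → ℂ} {C ρ : ℝ} (hρ : 0 < ρ)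
    (hb : ∀ j k, ‖a j k‖ ≤ C / ρ ^ (j + k)) {y : ℂ × ℂ}
    (h1 : ‖y.1‖ < ρ) (h2 : ‖y.2‖ < ρ) :
    Summable (fun p : ℕ × ℕ => a p.1 p.2 * y.1 ^ p.1 * y.2 ^ p.2) := by
  have hC : 0 ≤ C := by
    have := le_trans (norm_nonneg (a 0 0)) (hb 0 0)
    simpa using this
  apply Summable.of_norm
  have hbd : ∀ p : ℕ × ℕ, ‖a p.1 p.2 * y.1 ^ p.1 * y.2 ^ p.2‖ ≤
      (C * (‖y.1‖ / ρ) ^ p.1) * ((‖y.2‖ / ρ) ^ p.2) := by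
    rintro ⟨j, k⟩
    have hkey : (C * (‖y.1‖ / ρ) ^ j) * ((‖y.2‖ / ρ) ^ k)
        = (C / ρ ^ (j + k)) * (‖y.1‖ ^ j * ‖y.2‖ ^ k) := by
      rw [div_pow, div_pow, pow_add]
      field_simp
    rw [hkey]
    simp only [norm_mul, norm_pow]
    calc ‖a j k‖ * ‖y.1‖ ^ j * ‖y.2‖ ^ k
        ≤ (C / ρ ^ (j + k)) * ‖y.1‖ ^ j * ‖y.2‖ ^ k := by
          have := hb j k
          gcongr
      _ = (C / ρ ^ (j + k)) * (‖y.1‖ ^ j * ‖y.2‖ ^ k) := by ring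
  refine Summable.of_nonneg_of_le (fun _ => norm_nonneg _) hbd ?_
  have g1 : Summable (fun j : ℕ => C * (‖y.1‖ / ρ) ^ j) := by
    refine Summable.mul_left C (summable_geometric_of_lt_one (by positivity) ?_)
    rw [div_lt_one hρ]; exact h1
  have g2 : Summable (fun k : ℕ => (‖y.2‖ / ρ) ^ k) := by
    refine summable_geometric_of_lt_one (by positivity) ?_
    rw [div_lt_one hρ]; exact h2
  exact g1.mul_of_nonneg g2 (fun j => by positivity) (fun k => by positivity)

lemma hasSum_antidiagonal {f : ℕ × ℕ → ℂ} {S : ℂ} (hS : HasSum f S) :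
    HasSum (fun n => ∑ j ∈ Finset.range (n + 1), f (j, n - j)) S := by
  have h1 : HasSum (f ∘ Finset.HasAntidiagonal.sigmaAntidiagonalEquivProd) S :=
    (Finset.HasAntidiagonal.sigmaAntidiagonalEquivProd.hasSum_iff).mpr hS
  have h2 : HasSum (fun n => ∑ p ∈ Finset.HasAntidiagonal.antidiagonal n, f p) S := by
    refine h1.sigma fun n => ?_
    exact (Finset.HasAntidiagonal.antidiagonal n).hasSum f
  simpa only [Finset.Nat.sum_antidiagonal_eq_sum_range_succ_mk] using h2


lemma norm_qser_le {a : ℕ → ℕ → ℂ} {C ρ : ℝ} (hρ : 0 < ρ)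
    (hb : ∀ j k, ‖a j k‖ ≤ C / ρ ^ (j + k)) (n : ℕ) :
    ‖qser a n‖ ≤ (n + 1) * (C / ρ ^ n) := by
  have hterm : ∀ j ∈ range (n + 1), ‖a j (n - j) • mon n j‖ ≤ C / ρ ^ n := by
    intro j hj
    have hj' : j + (n - j) = n := by
      have := Finset.mem_range.mp hj; omega
    refine le_trans (ContinuousMultilinearMap.opNorm_smul_le _ _) ?_
    calc ‖a j (n - j)‖ * ‖mon n j‖ ≤ (C / ρ ^ n) * 1 := by
          refine mul_le_mul ?_ (norm_mon_le n j) (norm_nonneg _) ?_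
          · have := hb j (n - j); rwa [hj'] at this
          · have h0 : 0 ≤ ‖a j (n-j)‖ := norm_nonneg _
            have := (hb j (n - j)); rw [hj'] at this
            linarith
      _ = C / ρ ^ n := mul_one _
  refine le_trans (norm_sum_le _ _) ?_
  refine le_trans (Finset.sum_le_sum hterm) ?_
  rw [Finset.sum_const, Finset.card_range, nsmul_eq_mul]
  push_cast
  exact le_refl _

lemma hasFPowerSeries_gfun {a : ℕ → ℕ → ℂ} {C ρ : ℝ} (hρ : 0 < ρ) (hC : 0 ≤ C)
    (hb : ∀ j k, ‖a j k‖ ≤ C / ρ ^ (j + k)) :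
    HasFPowerSeriesOnBall (gfun a) (qser a) 0 (ENNReal.ofReal (ρ / 2)) := by
  have hcoe : ((ρ / 2).toNNReal : ℝ) = ρ / 2 := Real.coe_toNNReal _ (by positivity)
  constructor
  · -- radius bound
    have hbound : ∀ n : ℕ, ‖qser a n‖ * ((ρ / 2).toNNReal : ℝ) ^ n ≤ C := by
      intro n
      rw [hcoe]
      have h1 : ‖qser a n‖ * (ρ / 2) ^ n ≤ ((n + 1) * (C / ρ ^ n)) * (ρ / 2) ^ n := by
        have := norm_qser_le hρ hb n
        have hpos : (0:ℝ) ≤ (ρ / 2) ^ n := by positivity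
        exact mul_le_mul_of_nonneg_right this hpos
      refine le_trans h1 ?_
      have h2 : ((n:ℝ) + 1) * (C / ρ ^ n) * (ρ / 2) ^ n = ((n + 1) / 2 ^ n) * C := by
        rw [div_pow]
        field_simp
      rw [h2]
      have h3 : ((n:ℝ) + 1) / 2 ^ n ≤ 1 := by
        rw [div_le_one (by positivity)]
        have := Nat.lt_two_pow_self (n := n)
        exact_mod_cast Nat.succ_le_of_lt this
      calc ((n:ℝ) + 1) / 2 ^ n * C ≤ 1 * C := mul_le_mul_of_nonneg_right h3 hC
        _ = C := one_mul _
    exact (qser a).le_radius_of_bound C hbound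
  · exact ENNReal.ofReal_pos.mpr (by positivity)
  · intro y hy
    rw [mem_emetric_ball_zero_iff] at hy
    have hy' : ‖y‖ < ρ / 2 := by
      have : (‖y‖₊ : ℝ≥0∞) < ((ρ / 2).toNNReal : ℝ≥0∞) := hy
      rw [ENNReal.coe_lt_coe] at this
      calc ‖y‖ = (‖y‖₊ : ℝ) := rfl
        _ < ((ρ / 2).toNNReal : ℝ) := by exact_mod_cast this
        _ = ρ / 2 := hcoe
    have h1 : ‖y.1‖ < ρ := lt_of_le_of_lt (norm_fst_le y) (by linarith)
    have h2 : ‖y.2‖ < ρ := lt_of_le_of_lt (norm_snd_le y) (by linarith)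
    have hsummable := summable_aux hρ hb h1 h2
    have hsum : HasSum (fun p : ℕ × ℕ => a p.1 p.2 * y.1 ^ p.1 * y.2 ^ p.2) (gfun a y) :=
      hsummable.hasSum
    have hgrp := hasSum_antidiagonal hsum
    rw [zero_add]
    have hq : ∀ n, (qser a n) (fun _ => y) = ∑ j ∈ range (n + 1), a j (n - j) * y.1 ^ j * y.2 ^ (n - j) := by
      intro n
      simp only [qser, ContinuousMultilinearMap.sum_apply, ContinuousMultilinearMap.smul_apply,
        smul_eq_mul]
      refine Finset.sum_congr rfl fun j hj => ?_
      rw [mon_apply n j (by have := Finset.mem_range.mp hj; omega), mul_assoc]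
    have heq : (fun n => (qser a n) fun _ => y)
        = fun n => ∑ j ∈ range (n + 1), a j (n - j) * y.1 ^ j * y.2 ^ (n - j) := funext hq
    rw [heq]
    exact hgrp

lemma norm_e1 : ‖((1:ℂ), (0:ℂ))‖ = 1 := by
  simp [Prod.norm_def]

lemma norm_e2 : ‖((0:ℂ), (1:ℂ))‖ = 1 := by
  simp [Prod.norm_def]

lemma local_expansion (f : ℂ × ℂ → ℂ) (x : ℂ × ℂ) (hf : AnalyticAt ℂ f x) :
    ∃ (b : ℕ → ℕ → ℂ) (C ρ : ℝ), 0 < ρ ∧ ρ ≤ 1 ∧ 0 ≤ C ∧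
      (∀ j k, ‖b j k‖ ≤ C / ρ ^ (j + k)) ∧
      ∀ y : ℂ × ℂ, ‖y.1‖ < ρ → ‖y.2‖ < ρ →
        HasSum (fun q : ℕ × ℕ => b q.1 q.2 * y.1 ^ q.1 * y.2 ^ q.2) (f (x + y)) := by
  obtain ⟨p, r, hpr⟩ : ∃ (p : FormalMultilinearSeries ℂ (ℂ × ℂ) ℂ) (r : ℝ≥0∞),
      HasFPowerSeriesOnBall f p x r := by
    obtain ⟨p, hp⟩ := hf
    obtain ⟨r, hpr⟩ := hp
    exact ⟨p, r, hpr⟩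
  obtain ⟨ρ₀, hρ₀pos, hρ₀lt⟩ : ∃ ρ₀ : ℝ≥0, 0 < ρ₀ ∧ (ρ₀ : ℝ≥0∞) < min r 1 := by
    have hpos : (0 : ℝ≥0∞) < min r 1 := lt_min hpr.r_pos (by norm_num)
    obtain ⟨t, ht0, ht1⟩ := ENNReal.lt_iff_exists_nnreal_btwn.mp hpos
    refine ⟨t, ?_, ht1⟩
    exact_mod_cast ht0
  have hρ₀r : (ρ₀ : ℝ≥0∞) < r := lt_of_lt_of_le hρ₀lt (min_le_left _ _)
  have hρ₀1 : (ρ₀ : ℝ) < 1 := by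
    have : (ρ₀ : ℝ≥0∞) < 1 := lt_of_lt_of_le hρ₀lt (min_le_right _ _)
    exact_mod_cast this
  have hρ₀pos' : (0 : ℝ) < ρ₀ := by exact_mod_cast hρ₀pos
  obtain ⟨C₀, hC₀pos, hC₀⟩ := p.norm_mul_pow_le_of_lt_radius (lt_of_lt_of_le hρ₀r hpr.r_le)
  set e1 : ℂ × ℂ := ((1:ℂ), (0:ℂ)) with he1
  set e2 : ℂ × ℂ := ((0:ℂ), (1:ℂ)) with he2
  set bb : ℕ → ℕ → ℂ := fun n j =>
    ∑ S ∈ Finset.powersetCard j (Finset.univ : Finset (Fin n)),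
      p n (fun i => if i ∈ S then e1 else e2) with hbb
  have hbnd : ∀ j k, ‖bb (j + k) j‖ ≤ C₀ / ((ρ₀ : ℝ) / 2) ^ (j + k) := by
    intro j k
    have hterm : ∀ S ∈ Finset.powersetCard j (Finset.univ : Finset (Fin (j + k))),
        ‖p (j + k) (fun i => if i ∈ S then e1 else e2)‖ ≤ ‖p (j + k)‖ := by
      intro S _
      have := (p (j + k)).le_opNorm (fun i => if i ∈ S then e1 else e2)
      have hprod : (∏ i : Fin (j + k), ‖if i ∈ S then e1 else e2‖) = 1 := by
        refine Finset.prod_eq_one fun i _ => ?_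
        split
        · exact norm_e1
        · exact norm_e2
      rw [hprod, mul_one] at this
      exact this
    have h1 : ‖bb (j + k) j‖ ≤
        (Finset.powersetCard j (Finset.univ : Finset (Fin (j + k)))).card * ‖p (j + k)‖ := by
      refine le_trans (norm_sum_le _ _) ?_
      rw [← nsmul_eq_mul, ← Finset.sum_const]
      exact Finset.sum_le_sum hterm
    have hcard : (Finset.powersetCard j (Finset.univ : Finset (Fin (j + k)))).card
        = Nat.choose (j + k) j := by
      rw [Finset.card_powersetCard, Finset.card_univ, Fintype.card_fin]
    have hchoose : (Nat.choose (j + k) j : ℝ) ≤ 2 ^ (j + k) := by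
      have h : Nat.choose (j + k) j ≤ 2 ^ (j + k) := by
        rcases le_or_gt j (j + k) with h | h
        · calc Nat.choose (j + k) j ≤ ∑ i ∈ range (j + k + 1), Nat.choose (j + k) i :=
              Finset.single_le_sum (fun i _ => Nat.zero_le _) (Finset.mem_range.mpr (by omega))
            _ = 2 ^ (j + k) := Nat.sum_range_choose (j + k)
        · rw [Nat.choose_eq_zero_of_lt h]; exact Nat.zero_le _
      exact_mod_cast h
    have hpn : ‖p (j + k)‖ ≤ C₀ / (ρ₀ : ℝ) ^ (j + k) := by
      rw [le_div_iff₀ (by positivity)]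
      exact hC₀ (j + k)
    calc ‖bb (j + k) j‖ ≤ (Nat.choose (j + k) j : ℝ) * ‖p (j + k)‖ := by rw [← hcard]; exact h1
      _ ≤ 2 ^ (j + k) * (C₀ / (ρ₀ : ℝ) ^ (j + k)) := by
          refine mul_le_mul hchoose hpn (norm_nonneg _) (by positivity)
      _ = C₀ / ((ρ₀ : ℝ) / 2) ^ (j + k) := by
          rw [div_pow]
          field_simp
  refine ⟨fun j k => bb (j + k) j, C₀, ρ₀ / 2, by positivity, by linarith, le_of_lt hC₀pos,
    hbnd, ?_⟩
  intro y hy1 hy2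
  have hynorm : ‖y‖ < (ρ₀ : ℝ) := by
    rw [Prod.norm_def]
    rw [max_lt_iff]
    constructor <;> linarith
  have hymem : y ∈ Metric.eball (0 : ℂ × ℂ) r := by
    rw [mem_emetric_ball_zero_iff]
    refine lt_trans ?_ hρ₀r
    rw [← ofReal_norm, ENNReal.ofReal_eq_coe_nnreal (norm_nonneg _)]
    rw [ENNReal.coe_lt_coe, ← NNReal.coe_lt_coe]
    exact hynorm
  have hsum0 := hpr.hasSum hymem
  have hq : ∀ n, (p n) (fun _ => y) = ∑ j ∈ range (n + 1), bb n j * y.1 ^ j * y.2 ^ (n - j) := by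
    intro n
    have hy : (fun _ : Fin n => y)
        = (fun _ : Fin n => y.1 • e1) + (fun _ : Fin n => y.2 • e2) := by
      funext i
      simp only [Pi.add_apply, he1, he2, Prod.smul_mk, smul_eq_mul, Prod.mk_add_mk,
        mul_one, mul_zero, add_zero, zero_add]
    rw [hy, (p n).map_add_univ]
    rw [← Finset.powerset_univ, Finset.sum_powerset]
    simp only [Finset.card_univ, Fintype.card_fin]
    refine Finset.sum_congr rfl fun j hj => ?_
    have hS : ∀ S ∈ Finset.powersetCard j (Finset.univ : Finset (Fin n)),
        (p n) (S.piecewise (fun _ => y.1 • e1) (fun _ => y.2 • e2))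
        = y.1 ^ j * y.2 ^ (n - j) * (p n) (fun i => if i ∈ S then e1 else e2) := by
      intro S hSmem
      have hScard : S.card = j := (Finset.mem_powersetCard.mp hSmem).2
      have hpw : S.piecewise (fun _ => y.1 • e1) (fun _ => y.2 • e2)
          = fun i => (if i ∈ S then y.1 else y.2) • (if i ∈ S then e1 else e2) := by
        funext i
        by_cases h : i ∈ S <;> simp [Finset.piecewise, h]
      rw [hpw, (p n).map_smul_univ]
      have hprod : (∏ i : Fin n, (if i ∈ S then y.1 else y.2)) = y.1 ^ j * y.2 ^ (n - j) := by
        rw [← Finset.prod_sdiff (Finset.subset_univ S)]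
        have hA : (∏ i ∈ (Finset.univ : Finset (Fin n)) \ S, (if i ∈ S then y.1 else y.2))
            = y.2 ^ (n - j) := by
          rw [Finset.prod_congr rfl (fun i hi => if_neg (Finset.mem_sdiff.mp hi).2),
            Finset.prod_const, Finset.card_sdiff_of_subset (Finset.subset_univ S),
            Finset.card_univ, Fintype.card_fin, hScard]
        have hB : (∏ i ∈ S, (if i ∈ S then y.1 else y.2)) = y.1 ^ j := by
          rw [Finset.prod_congr rfl (fun i hi => if_pos hi), Finset.prod_const, hScard]
        rw [hA, hB]
        ring
      rw [hprod, smul_eq_mul]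
    rw [Finset.sum_congr rfl hS, ← Finset.mul_sum]
    ring
  have hsummableF := summable_aux (a := fun j k => bb (j + k) j) (C := C₀) (ρ := (ρ₀ : ℝ) / 2)
    (by positivity) hbnd hy1 hy2
  have hgrp := hasSum_antidiagonal hsummableF.hasSum
  have heq : (fun n => ∑ j ∈ range (n + 1),
        (fun q : ℕ × ℕ => bb (q.1 + q.2) q.1 * y.1 ^ q.1 * y.2 ^ q.2) (j, n - j))
      = fun n => (p n) fun _ => y := by
    funext n
    rw [hq n]
    refine Finset.sum_congr rfl fun j hj => ?_
    have hjn : j + (n - j) = n := by have := Finset.mem_range.mp hj; omega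
    simp only [hjn]
  rw [heq] at hgrp
  have hfinal := hgrp.unique hsum0
  exact hfinal ▸ hsummableF.hasSum

lemma cpow_half_sq (z : ℂ) : (z ^ ((1:ℂ)/2)) ^ 2 = z := by
  by_cases hz : z = 0
  · rw [hz, Complex.zero_cpow (by norm_num : (1:ℂ)/2 ≠ 0)]
    norm_num
  · rw [pow_two, ← Complex.cpow_add _ _ hz]
    norm_num

lemma norm_cpow_half_lt {z : ℂ} {ρ : ℝ} (hρ : 0 < ρ) (hz : ‖z‖ < ρ ^ 2) :
    ‖z ^ ((1:ℂ)/2)‖ < ρ := by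
  have h1 : ‖z ^ ((1:ℂ)/2)‖ ^ 2 = ‖z‖ := by
    rw [← norm_pow, cpow_half_sq]
  nlinarith [norm_nonneg (z ^ ((1:ℂ)/2))]

lemma branch (z₀ : ℂ) (hz : z₀ ≠ 0) :
    ∃ h : ℂ → ℂ, AnalyticAt ℂ h z₀ ∧ h z₀ ≠ 0 ∧ ∀ᶠ z in 𝓝 z₀, h z ^ 2 = z := by
  have cpow_an : ∀ w : ℂ, w ∈ Complex.slitPlane → AnalyticAt ℂ (fun z : ℂ => z ^ ((1:ℂ)/2)) w := by
    intro w hw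
    have hd : DifferentiableOn ℂ (fun z : ℂ => z ^ ((1:ℂ)/2)) Complex.slitPlane := by
      intro z hzmem
      exact ((differentiableAt_id.cpow (differentiableAt_const _) hzmem)).differentiableWithinAt
    exact hd.analyticAt (Complex.isOpen_slitPlane.mem_nhds hw)
  by_cases hmem : z₀ ∈ Complex.slitPlane
  · refine ⟨fun z => z ^ ((1:ℂ)/2), cpow_an z₀ hmem, ?_, ?_⟩
    · intro h0
      have h2' := cpow_half_sq z₀
      simp only at h0
      rw [h0] at h2'
      simp at h2'
      exact hz h2'.symm
    · filter_upwards [eventually_ne_nhds hz] with z hz0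
      exact cpow_half_sq z
  · have hnot : ¬(0 < z₀.re ∨ z₀.im ≠ 0) := by
      rw [← Complex.mem_slitPlane_iff]; exact hmem
    push_neg at hnot
    obtain ⟨h1, h2⟩ := hnot
    have hre : z₀.re < 0 := by
      rcases lt_or_eq_of_le h1 with h | h
      · exact h
      · exact absurd (Complex.ext (by simpa using h) (by simpa using h2)) hz
    have hneg : -z₀ ∈ Complex.slitPlane := by
      rw [Complex.mem_slitPlane_iff]
      left
      simp only [Complex.neg_re]
      linarith
    refine ⟨fun z => Complex.I * (-z) ^ ((1:ℂ)/2), ?_, ?_, ?_⟩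
    · have h1 : AnalyticAt ℂ (fun z : ℂ => (-z) ^ ((1:ℂ)/2)) z₀ :=
        (cpow_an (-z₀) hneg).comp (analyticAt_id.neg)
      exact analyticAt_const.mul h1
    · intro h0
      rcases mul_eq_zero.mp h0 with h | h
      · exact Complex.I_ne_zero h
      · have h2' := cpow_half_sq (-z₀)
        rw [h] at h2'
        have hz0 : (-z₀ : ℂ) = 0 := by simpa using h2'.symm
        exact hz (neg_eq_zero.mp hz0)
    · filter_upwards [eventually_ne_nhds hz] with z hz0
      have : (Complex.I * (-z) ^ ((1:ℂ)/2)) ^ 2 = Complex.I ^ 2 * ((-z) ^ ((1:ℂ)/2)) ^ 2 := by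
        ring
      rw [this, cpow_half_sq, Complex.I_sq]
      ring

lemma even_factor (f : ℂ × ℂ → ℂ) (hf : ∀ z, AnalyticAt ℂ f z)
    (he : ∀ t s : ℂ, f (-t, s) = f (t, s)) :
    ∃ P : ℂ × ℂ → ℂ, (∀ z, AnalyticAt ℂ P z) ∧ ∀ t s : ℂ, f (t, s) = P (t ^ 2, s) := by
  set P : ℂ × ℂ → ℂ := fun y => f (y.1 ^ ((1:ℂ)/2), y.2) with hPdef
  have key : ∀ t u : ℂ, u ^ 2 = t ^ 2 → ∀ s : ℂ, f (u, s) = f (t, s) := by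
    intro t u hu s
    have huu : u * u = t * t := by
      rw [← pow_two, ← pow_two, hu]
    rcases mul_self_eq_mul_self_iff.mp huu with h | h
    · rw [h]
    · rw [h]
      exact he t s
  have hPval : ∀ t s : ℂ, f (t, s) = P (t ^ 2, s) := by
    intro t s
    have h2 : ((t ^ 2 : ℂ) ^ ((1:ℂ)/2)) ^ 2 = t ^ 2 := cpow_half_sq _
    exact (key t _ h2 s).symm
  refine ⟨P, ?_, hPval⟩
  rintro ⟨z₀, s₀⟩
  by_cases hz : z₀ = 0
  · subst hz
    obtain ⟨b, C, ρ, hρpos, hρ1, hC, hbnd, hsum⟩ := local_expansion f (0, s₀) (hf _)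
    set a : ℕ → ℕ → ℂ := fun n k => b (2 * n) k with ha
    have hbnd' : ∀ n k, ‖a n k‖ ≤ C / (ρ ^ 2) ^ (n + k) := by
      intro n k
      refine le_trans (hbnd (2 * n) k) ?_
      have h1 : (ρ ^ 2) ^ (n + k) ≤ ρ ^ (2 * n + k) := by
        rw [← pow_mul]
        exact pow_le_pow_of_le_one (le_of_lt hρpos) hρ1 (by omega)
      gcongr
    have hg := hasFPowerSeries_gfun (a := a) (C := C) (ρ := ρ ^ 2) (by positivity) hC hbnd'
    -- identity
    have hid : ∀ w δ : ℂ, ‖w‖ < ρ → ‖δ‖ < ρ → f (w, s₀ + δ) = gfun a (w ^ 2, δ) := by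
      intro w δ hw hδ
      have hxw : ((0:ℂ), s₀) + (w, δ) = (w, s₀ + δ) := by simp [Prod.ext_iff]
      have hxw' : ((0:ℂ), s₀) + (-w, δ) = (-w, s₀ + δ) := by simp [Prod.ext_iff]
      have h1 := hsum (w, δ) hw hδ
      have h2 := hsum (-w, δ) (by simpa using hw) hδ
      rw [hxw] at h1
      rw [hxw', he w (s₀ + δ)] at h2
      have h3 := (h1.add h2).div_const 2
      have h3' : HasSum (fun q : ℕ × ℕ =>
          (b q.1 q.2 * w ^ q.1 * δ ^ q.2 + b q.1 q.2 * (-w) ^ q.1 * δ ^ q.2) / 2)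
          (f (w, s₀ + δ)) := by
        have : (f (w, s₀ + δ) + f (w, s₀ + δ)) / 2 = f (w, s₀ + δ) := by ring
        rwa [this] at h3
      set inj : ℕ × ℕ → ℕ × ℕ := fun q => (2 * q.1, q.2) with hinj
      have hinj' : Function.Injective inj := by
        rintro ⟨a1, a2⟩ ⟨b1, b2⟩ h
        simp only [hinj, Prod.mk.injEq] at h
        exact Prod.ext (by omega) h.2
      have hoff : ∀ q : ℕ × ℕ, q ∉ Set.range inj →
          (b q.1 q.2 * w ^ q.1 * δ ^ q.2 + b q.1 q.2 * (-w) ^ q.1 * δ ^ q.2) / 2 = 0 := by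
        rintro ⟨j, k⟩ hq
        have hodd : ¬ Even j := by
          intro hev
          obtain ⟨m, hm⟩ := hev
          exact hq ⟨(m, k), by simp [hinj, Prod.ext_iff]; omega⟩
        have : (-w) ^ j = -(w ^ j) := (Nat.not_even_iff_odd.mp hodd).neg_pow w
        rw [this]
        ring
      have h4 := (Function.Injective.hasSum_iff hinj' hoff).mpr h3'
      have hfun : ((fun q : ℕ × ℕ =>
          (b q.1 q.2 * w ^ q.1 * δ ^ q.2 + b q.1 q.2 * (-w) ^ q.1 * δ ^ q.2) / 2) ∘ inj)
          = fun q : ℕ × ℕ => a q.1 q.2 * (w ^ 2) ^ q.1 * δ ^ q.2 := by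
        funext q
        simp only [Function.comp_apply, hinj, ha]
        have h6 : (-w) ^ (2 * q.1) = w ^ (2 * q.1) := (even_two_mul q.1).neg_pow w
        have h7 : (w ^ 2) ^ q.1 = w ^ (2 * q.1) := by rw [← pow_mul]
        rw [h6, h7]
        ring
      rw [hfun] at h4
      exact h4.tsum_eq.symm
    -- analyticity at (0, s₀)
    have hτ : AnalyticAt ℂ (fun y : ℂ × ℂ => ((y.1 : ℂ), y.2 - s₀)) ((0:ℂ), s₀) :=
      analyticAt_fst.prod (analyticAt_snd.sub analyticAt_const)
    have hgan' : AnalyticAt ℂ (gfun a) ((fun y : ℂ × ℂ => ((y.1 : ℂ), y.2 - s₀)) ((0:ℂ), s₀)) := by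
      have h0 : ((fun y : ℂ × ℂ => ((y.1 : ℂ), y.2 - s₀)) ((0:ℂ), s₀)) = (0 : ℂ × ℂ) := by
        simp [Prod.ext_iff]
      rw [h0]
      exact hg.analyticAt
    have hcomp : AnalyticAt ℂ (fun y : ℂ × ℂ => gfun a (y.1, y.2 - s₀)) ((0:ℂ), s₀) := by
      exact AnalyticAt.comp (g := gfun a) (f := fun y : ℂ × ℂ => ((y.1 : ℂ), y.2 - s₀)) hgan' hτ
    refine hcomp.congr ?_
    have hball := Metric.ball_mem_nhds ((0:ℂ), s₀) (show (0:ℝ) < min (ρ ^ 2) ρ by positivity)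
    filter_upwards [hball] with y hy
    rw [Metric.mem_ball, Prod.dist_eq, max_lt_iff] at hy
    obtain ⟨hy1, hy2⟩ := hy
    rw [dist_zero_right] at hy1
    rw [dist_eq_norm] at hy2
    have hy1' : ‖y.1‖ < ρ ^ 2 := lt_of_lt_of_le hy1 (min_le_left _ _)
    have hy2' : ‖y.2 - s₀‖ < ρ := lt_of_lt_of_le hy2 (min_le_right _ _)
    have hw : ‖y.1 ^ ((1:ℂ)/2)‖ < ρ := norm_cpow_half_lt hρpos hy1'
    have hmain := hid (y.1 ^ ((1:ℂ)/2)) (y.2 - s₀) hw hy2'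
    rw [cpow_half_sq] at hmain
    have hs : s₀ + (y.2 - s₀) = y.2 := by ring
    rw [hs] at hmain
    exact hmain.symm
  · obtain ⟨h, hhan, hh0, hh⟩ := branch z₀ hz
    have hpair : AnalyticAt ℂ (fun y : ℂ × ℂ => ((h y.1 : ℂ), y.2)) (z₀, s₀) :=
      (hhan.comp analyticAt_fst).prod analyticAt_snd
    have hfan : AnalyticAt ℂ (fun y : ℂ × ℂ => f (h y.1, y.2)) (z₀, s₀) := (hf _).comp hpair
    refine hfan.congr ?_
    have hev : ∀ᶠ y : ℂ × ℂ in 𝓝 (z₀, s₀), h y.1 ^ 2 = y.1 := continuousAt_fst.eventually (p := fun z => h z ^ 2 = z) hh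
    filter_upwards [hev] with y hy
    have hsq2 : (y.1 ^ ((1:ℂ)/2)) ^ 2 = (h y.1) ^ 2 := by rw [cpow_half_sq, hy]
    exact (key (h y.1) (y.1 ^ ((1:ℂ)/2)) hsq2 y.2).symm

lemma odd_factor (f : ℂ × ℂ → ℂ) (hf : ∀ z, AnalyticAt ℂ f z)
    (ho : ∀ t s : ℂ, f (-t, s) = -f (t, s)) :
    ∃ Q : ℂ × ℂ → ℂ, (∀ z, AnalyticAt ℂ Q z) ∧ ∀ t s : ℂ, f (t, s) = t * Q (t ^ 2, s) := by
  set Q : ℂ × ℂ → ℂ := fun y =>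
    if y.1 = 0 then deriv (fun t => f (t, y.2)) 0
    else f (y.1 ^ ((1:ℂ)/2), y.2) / (y.1 ^ ((1:ℂ)/2)) with hQdef
  have hf0 : ∀ s : ℂ, f (0, s) = 0 := by
    intro s
    have h := ho 0 s
    rw [neg_zero] at h
    exact add_self_eq_zero.mp (by linear_combination h)
  have key : ∀ t u : ℂ, u ^ 2 = t ^ 2 → ∀ s : ℂ, f (u, s) / u = f (t, s) / t := by
    intro t u hu s
    have huu : u * u = t * t := by rw [← pow_two, ← pow_two, hu]
    rcases mul_self_eq_mul_self_iff.mp huu with h | h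
    · rw [h]
    · rw [h, ho, neg_div_neg_eq]
  have hQval : ∀ t s : ℂ, f (t, s) = t * Q (t ^ 2, s) := by
    intro t s
    by_cases ht : t = 0
    · subst ht
      simp [hf0 s]
    · have ht2 : (t ^ 2 : ℂ) ≠ 0 := pow_ne_zero _ ht
      rw [hQdef]
      simp only [if_neg ht2]
      have h2 : ((t ^ 2 : ℂ) ^ ((1:ℂ)/2)) ^ 2 = t ^ 2 := cpow_half_sq _
      have hk := key t _ h2 s
      rw [hk]
      field_simp
  refine ⟨Q, ?_, hQval⟩
  rintro ⟨z₀, s₀⟩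
  by_cases hz : z₀ = 0
  · subst hz
    obtain ⟨b, C, ρ, hρpos, hρ1, hC, hbnd, hsum⟩ := local_expansion f (0, s₀) (hf _)
    set a : ℕ → ℕ → ℂ := fun n k => b (2 * n + 1) k with ha
    have hbnd' : ∀ n k, ‖a n k‖ ≤ (C / ρ) / (ρ ^ 2) ^ (n + k) := by
      intro n k
      refine le_trans (hbnd (2 * n + 1) k) ?_
      have heq : C / ρ ^ (2 * n + 1 + k) = (C / ρ) / ρ ^ (2 * n + k) := by
        rw [div_div]
        congr 1
        rw [← pow_succ']
        congr 1
        omega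
      rw [heq]
      have h1 : (ρ ^ 2) ^ (n + k) ≤ ρ ^ (2 * n + k) := by
        rw [← pow_mul]
        exact pow_le_pow_of_le_one (le_of_lt hρpos) hρ1 (by omega)
      gcongr
    have hg := hasFPowerSeries_gfun (a := a) (C := C / ρ) (ρ := ρ ^ 2) (by positivity)
      (div_nonneg hC (le_of_lt hρpos)) hbnd'
    have hid : ∀ w δ : ℂ, ‖w‖ < ρ → ‖δ‖ < ρ ^ 2 → f (w, s₀ + δ) = w * gfun a (w ^ 2, δ) := by
      intro w δ hw hδ
      have hδρ : ‖δ‖ < ρ := lt_of_lt_of_le hδ (by nlinarith)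
      have hxw : ((0:ℂ), s₀) + (w, δ) = (w, s₀ + δ) := by simp [Prod.ext_iff]
      have hxw' : ((0:ℂ), s₀) + (-w, δ) = (-w, s₀ + δ) := by simp [Prod.ext_iff]
      have h1 := hsum (w, δ) hw hδρ
      have h2 := hsum (-w, δ) (by simpa using hw) hδρ
      rw [hxw] at h1
      rw [hxw', ho w (s₀ + δ)] at h2
      have h3 := (h1.sub h2).div_const 2
      have h3' : HasSum (fun q : ℕ × ℕ =>
          (b q.1 q.2 * w ^ q.1 * δ ^ q.2 - b q.1 q.2 * (-w) ^ q.1 * δ ^ q.2) / 2)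
          (f (w, s₀ + δ)) := by
        have hs2 : (f (w, s₀ + δ) - -f (w, s₀ + δ)) / 2 = f (w, s₀ + δ) := by ring
        rwa [hs2] at h3
      set inj : ℕ × ℕ → ℕ × ℕ := fun q => (2 * q.1 + 1, q.2) with hinj
      have hinj' : Function.Injective inj := by
        rintro ⟨a1, a2⟩ ⟨b1, b2⟩ hq
        simp only [hinj, Prod.mk.injEq] at hq
        exact Prod.ext (by omega) hq.2
      have hoff : ∀ q : ℕ × ℕ, q ∉ Set.range inj →
          (b q.1 q.2 * w ^ q.1 * δ ^ q.2 - b q.1 q.2 * (-w) ^ q.1 * δ ^ q.2) / 2 = 0 := by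
        rintro ⟨j, k⟩ hq
        have heven : Even j := by
          by_contra hodd
          obtain ⟨m, hm⟩ := Nat.not_even_iff_odd.mp hodd
          exact hq ⟨(m, k), by simp [hinj, Prod.ext_iff]; omega⟩
        rw [heven.neg_pow]
        ring
      have h4 := (Function.Injective.hasSum_iff hinj' hoff).mpr h3'
      have hfun : ((fun q : ℕ × ℕ =>
          (b q.1 q.2 * w ^ q.1 * δ ^ q.2 - b q.1 q.2 * (-w) ^ q.1 * δ ^ q.2) / 2) ∘ inj)
          = fun q : ℕ × ℕ => w * (a q.1 q.2 * (w ^ 2) ^ q.1 * δ ^ q.2) := by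
        funext q
        simp only [Function.comp_apply, hinj, ha]
        have hodd : Odd (2 * q.1 + 1) := ⟨q.1, by ring⟩
        have h6 : (-w) ^ (2 * q.1 + 1) = -(w ^ (2 * q.1 + 1)) := hodd.neg_pow w
        have h7 : (w ^ 2) ^ q.1 = w ^ (2 * q.1) := by rw [← pow_mul]
        rw [h6, h7, pow_succ]
        ring
      rw [hfun] at h4
      have hw2 : ‖w ^ 2‖ < ρ ^ 2 := by
        rw [norm_pow]
        exact pow_lt_pow_left₀ hw (norm_nonneg _) two_ne_zero
      have hsummable := summable_aux (a := a) (C := C / ρ) (ρ := ρ ^ 2) (by positivity) hbnd'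
        (y := (w ^ 2, δ)) hw2 hδ
      have hsg : HasSum (fun q : ℕ × ℕ => a q.1 q.2 * (w ^ 2) ^ q.1 * δ ^ q.2)
          (gfun a (w ^ 2, δ)) := hsummable.hasSum
      exact h4.unique (hsg.mul_left w)
    have hτ : AnalyticAt ℂ (fun y : ℂ × ℂ => ((y.1 : ℂ), y.2 - s₀)) ((0:ℂ), s₀) :=
      analyticAt_fst.prod (analyticAt_snd.sub analyticAt_const)
    have hgan' : AnalyticAt ℂ (gfun a) ((fun y : ℂ × ℂ => ((y.1 : ℂ), y.2 - s₀)) ((0:ℂ), s₀)) := by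
      have h0 : ((fun y : ℂ × ℂ => ((y.1 : ℂ), y.2 - s₀)) ((0:ℂ), s₀)) = (0 : ℂ × ℂ) := by
        simp [Prod.ext_iff]
      rw [h0]
      exact hg.analyticAt
    have hcomp : AnalyticAt ℂ (fun y : ℂ × ℂ => gfun a (y.1, y.2 - s₀)) ((0:ℂ), s₀) := by
      exact AnalyticAt.comp (g := gfun a) (f := fun y : ℂ × ℂ => ((y.1 : ℂ), y.2 - s₀)) hgan' hτ
    refine hcomp.congr ?_
    have hgOn := hg.analyticOnNhd
    have hball := Metric.ball_mem_nhds ((0:ℂ), s₀) (show (0:ℝ) < ρ ^ 2 / 2 by positivity)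
    filter_upwards [hball] with y hy
    rw [Metric.mem_ball, Prod.dist_eq, max_lt_iff] at hy
    obtain ⟨hy1, hy2⟩ := hy
    rw [dist_zero_right] at hy1
    rw [dist_eq_norm] at hy2
    have hδ2 : ‖y.2 - s₀‖ < ρ ^ 2 := by linarith [sq_nonneg ρ]
    have hs : s₀ + (y.2 - s₀) = y.2 := by ring
    by_cases hz0 : y.1 = 0
    · rw [hQdef]
      simp only
      rw [if_pos hz0]
      have hgδ : AnalyticAt ℂ (gfun a) ((0:ℂ), y.2 - s₀) := by
        refine hgOn _ ?_
        rw [mem_emetric_ball_zero_iff]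
        have hn : ‖((0:ℂ), y.2 - s₀)‖ < ρ ^ 2 / 2 := by
          rw [Prod.norm_def]
          simp only [norm_zero]
          rw [max_eq_right (norm_nonneg _)]
          exact hy2
        rw [← ofReal_norm]
        exact (ENNReal.ofReal_lt_ofReal_iff (by positivity)).mpr hn
      have hinner : AnalyticAt ℂ (fun t : ℂ => gfun a (t ^ 2, y.2 - s₀)) 0 := by
        have hval : AnalyticAt ℂ (gfun a) ((fun t : ℂ => ((t ^ 2 : ℂ), y.2 - s₀)) 0) := by
          have h00 : ((fun t : ℂ => ((t ^ 2 : ℂ), y.2 - s₀)) 0) = ((0:ℂ), y.2 - s₀) := by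
            simp
          rw [h00]
          exact hgδ
        exact AnalyticAt.comp (g := gfun a) hval ((analyticAt_id.pow 2).prod analyticAt_const)
      have hD : HasDerivAt (fun t : ℂ => t * gfun a (t ^ 2, y.2 - s₀))
          (gfun a (0, y.2 - s₀)) 0 := by
        have hd := hinner.differentiableAt.hasDerivAt
        have h1 := (hasDerivAt_id (0:ℂ)).mul hd
        convert h1 using 1
        · rfl
        · rfl
        · rfl
        · simp
      have hEv : (fun t : ℂ => f (t, y.2)) =ᶠ[𝓝 (0:ℂ)]
          fun t => t * gfun a (t ^ 2, y.2 - s₀) := by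
        filter_upwards [Metric.ball_mem_nhds (0:ℂ) hρpos] with t ht
        rw [Metric.mem_ball, dist_zero_right] at ht
        have hm := hid t (y.2 - s₀) ht hδ2
        rwa [hs] at hm
      have hD' := hD.congr_of_eventuallyEq hEv
      rw [hz0]
      exact hD'.deriv.symm
    · rw [hQdef]
      simp only [if_neg hz0]
      have hylt : ‖y.1‖ < ρ ^ 2 := by linarith [sq_nonneg ρ]
      have hwlt : ‖y.1 ^ ((1:ℂ)/2)‖ < ρ := norm_cpow_half_lt hρpos hylt
      have hw2 : (y.1 ^ ((1:ℂ)/2)) ^ 2 = y.1 := cpow_half_sq _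
      have hwne : y.1 ^ ((1:ℂ)/2) ≠ 0 := by
        intro h0
        apply hz0
        rw [← hw2, h0]
        ring
      have hmain := hid (y.1 ^ ((1:ℂ)/2)) (y.2 - s₀) hwlt hδ2
      rw [hw2, hs] at hmain
      rw [hmain]
      field_simp
  · obtain ⟨h, hhan, hh0, hh⟩ := branch z₀ hz
    have hpair : AnalyticAt ℂ (fun y : ℂ × ℂ => ((h y.1 : ℂ), y.2)) (z₀, s₀) :=
      (hhan.comp analyticAt_fst).prod analyticAt_snd
    have hfan : AnalyticAt ℂ (fun y : ℂ × ℂ => f (h y.1, y.2) / h y.1) (z₀, s₀) :=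
      AnalyticAt.div ((hf _).comp hpair) (hhan.comp analyticAt_fst) hh0
    refine hfan.congr ?_
    have hev : ∀ᶠ y : ℂ × ℂ in 𝓝 (z₀, s₀), h y.1 ^ 2 = y.1 := continuousAt_fst.eventually (p := fun z => h z ^ 2 = z) hh
    have hne : ∀ᶠ y : ℂ × ℂ in 𝓝 (z₀, s₀), y.1 ≠ 0 :=
      continuousAt_fst.eventually (eventually_ne_nhds hz)
    filter_upwards [hev, hne] with y hy hyne
    rw [hQdef]
    simp only [if_neg hyne]
    have hsq2 : (y.1 ^ ((1:ℂ)/2)) ^ 2 = (h y.1) ^ 2 := by rw [cpow_half_sq, hy]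
    exact (key (h y.1) (y.1 ^ ((1:ℂ)/2)) hsq2 y.2).symm

end Stmt15

end

/-- on the double cover V = {w₁² = z₁} of ℂ², parametrized by
(t, s) ↦ (z₁, z₂, w₁) = (t², s, t) with involution α(t,s) = (−t,s), a holomorphic
section ω = (A dt + B ds) ⊗ (dt ∧ ds) of Ω¹⊗Ω² is invariant iff
ω = (P(z₁,z₂) dz₁/z₁ + Q(z₁,z₂) dz₂) ⊗ (dz₁ ∧ dz₂), i.e. A(t,s) = P(t²,s) and
B(t,s) = t·Q(t²,s) with P, Q holomorphic (up to the constant jacobian factors),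
and anti-invariant iff ω = (P dz₁ + Q dz₂) ⊗ (dz₁∧dz₂)/w₁, i.e. A(t,s) = t·P(t²,s)
and B(t,s) = Q(t²,s). -/
theorem stmt_15 (A B : ℂ × ℂ → ℂ)
    (hA : ∀ z, AnalyticAt ℂ A z) (hB : ∀ z, AnalyticAt ℂ B z) :
    ((∀ t s : ℂ, A (-t, s) = A (t, s) ∧ B (-t, s) = -B (t, s)) ↔
      ∃ P Q : ℂ × ℂ → ℂ, (∀ z, AnalyticAt ℂ P z) ∧ (∀ z, AnalyticAt ℂ Q z) ∧
        ∀ t s : ℂ, A (t, s) = P (t ^ 2, s) ∧ B (t, s) = t * Q (t ^ 2, s)) ∧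
    ((∀ t s : ℂ, A (-t, s) = -A (t, s) ∧ B (-t, s) = B (t, s)) ↔
      ∃ P Q : ℂ × ℂ → ℂ, (∀ z, AnalyticAt ℂ P z) ∧ (∀ z, AnalyticAt ℂ Q z) ∧
        ∀ t s : ℂ, A (t, s) = t * P (t ^ 2, s) ∧ B (t, s) = Q (t ^ 2, s)) := by
  constructor
  · constructor
    · intro h
      obtain ⟨P, hPan, hPval⟩ := Stmt15.even_factor A hA (fun t s => (h t s).1)
      obtain ⟨Q, hQan, hQval⟩ := Stmt15.odd_factor B hB (fun t s => (h t s).2)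
      exact ⟨P, Q, hPan, hQan, fun t s => ⟨hPval t s, hQval t s⟩⟩
    · rintro ⟨P, Q, -, -, h⟩ t s
      constructor
      · rw [(h (-t) s).1, (h t s).1, neg_sq]
      · rw [(h (-t) s).2, (h t s).2, neg_sq]
        ring
  · constructor
    · intro h
      obtain ⟨P, hPan, hPval⟩ := Stmt15.odd_factor A hA (fun t s => (h t s).1)
      obtain ⟨Q, hQan, hQval⟩ := Stmt15.even_factor B hB (fun t s => (h t s).2)
      exact ⟨P, Q, hPan, hQan, fun t s => ⟨hPval t s, hQval t s⟩⟩
    · rintro ⟨P, Q, -, -, h⟩ t s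
      constructor
      · rw [(h (-t) s).1, (h t s).1, neg_sq]
        ring
      · rw [(h (-t) s).2, (h t s).2, neg_sq]
end
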